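/- Let p be a prime, and let A ⊆ B be a finite integral extension of reduced Noetherian rings with A of characteristic p. Then the following are equivalent: (i) A is weakly normal in B, i.e., every intermediate ring A ⊆ C ⊆ B for which the map Spec C → Spec A is bijective and, for each prime Q of C lying over P = Q ∩ A, the induced extension of residue fields κ(P) → κ(Q) is purely inseparable, satisfies C = A; (ii) every element b ∈ B with b^p ∈ A lies in A. -/

import Mathlib

/-!
If `b ^ p ∈ A`, then `C = {x | x ^ p ∈ A}` is a subring containing `A` and `b`, and `c ↦ c ^ p`
is a ring map `C → A` whose composites with the inclusion are Frobenius maps. These act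
trivially on spectra, so `Spec C → Spec A` is bijective, and the residue field extensions are
visibly purely inseparable; weak normality forces `C = A`.

Conversely, let `A ⊆ C` be weakly subintegral and suppose the conductor `𝔞 = {a | a C ⊆ A}` is
proper. Take a minimal prime `P` of `𝔞` and the unique prime `Q` of `C` over it; as `A` is
Noetherian, `w P^k ⊆ 𝔞` for some `w ∉ P`. For `c ∈ C`, pure inseparability of `κ(P) → κ(Q)`
gives `q = c^(p^n) t - a ∈ Q` with `t ∉ P`, and uniqueness of `Q` gives `v q^N ∈ P C` with
`v ∉ P`. For `p^m ≥ N k`, `w v^k (t c^(p^n))^(p^m) = w v^k (a^(p^m) + q^(p^m)) ∈ A`, and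
closure under `p`-th roots yields `u c ∈ A` with `u = w v^k t ∉ P`. Since `C` is a finite
`A`-module, finitely many such `u` multiply to an element of `𝔞` outside `P`: a contradiction.
-/

open IsLocalRing

/-- For an extension `A ≤ C` of subrings of `B` and a prime `Q` of `C` with `P = Q ∩ A`,
the induced map of residue fields `κ(P) →+* κ(Q)`. -/
noncomputable def residueFieldMapOfLE {B : Type*} [CommRing B] {A C : Subring B} (h : A ≤ C)
    (Q : PrimeSpectrum C) :
    ResidueField (Localization.AtPrime (Q.asIdeal.comap (Subring.inclusion h))) →+*
      ResidueField (Localization.AtPrime Q.asIdeal) :=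
  letI := Localization.isLocalHom_localRingHom (Q.asIdeal.comap (Subring.inclusion h))
    Q.asIdeal (Subring.inclusion h) rfl
  ResidueField.map
    (Localization.localRingHom (Q.asIdeal.comap (Subring.inclusion h)) Q.asIdeal
      (Subring.inclusion h) rfl)

/-- A ring homomorphism of fields (in characteristic `p`) is *purely inseparable* if every
element of the target has some `p ^ n`-th power lying in the image. -/
def RingHom.IsPurelyInseparableOfChar (p : ℕ) {K L : Type*} [CommRing K] [CommRing L]
    (f : K →+* L) : Prop :=
  ∀ x : L, ∃ n : ℕ, x ^ p ^ n ∈ Set.range f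

/-- An extension `A ≤ C` of subrings of `B` is *weakly subintegral* (in characteristic `p`) if
`Spec C → Spec A` is bijective and all the induced maps of residue fields are purely
inseparable. -/
def Subring.IsWeaklySubintegralIn {B : Type*} [CommRing B] (p : ℕ) (A C : Subring B)
    (h : A ≤ C) : Prop :=
  Function.Bijective (PrimeSpectrum.comap (Subring.inclusion h)) ∧
    ∀ Q : PrimeSpectrum C, (residueFieldMapOfLE h Q).IsPurelyInseparableOfChar p

/-- A subring `A` of `B` is *weakly normal in `B`* if the only weakly subintegral intermediate
extension `A ⊆ C ⊆ B` is `C = A`. -/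
def Subring.IsWeaklyNormalIn {B : Type*} [CommRing B] (p : ℕ) (A : Subring B) : Prop :=
  ∀ C : Subring B, (h : A ≤ C) → A.IsWeaklySubintegralIn p C h → C = A

open Function

theorem PrimeSpectrum.comap_eq_id_of_forall_eq_pow {R : Type*} [CommRing R] {φ : R →+* R}
    {n : ℕ} (hn : n ≠ 0) (hφ : ∀ x, φ x = x ^ n) : PrimeSpectrum.comap φ = id := by
  funext Q
  ext x
  exact (congrArg (· ∈ Q.asIdeal) (hφ x)).to_iff.trans (Q.isPrime.pow_mem_iff_mem n hn.bot_lt)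

theorem PrimeSpectrum.comap_bijective_of_forall_comp_eq_pow {R S : Type*} [CommRing R]
    [CommRing S] {f : R →+* S} {n : ℕ} (hn : n ≠ 0) (g : S →+* R)
    (hgf : ∀ x, g (f x) = x ^ n) (hfg : ∀ y, f (g y) = y ^ n) :
    Bijective (PrimeSpectrum.comap f) := by
  refine bijective_iff_has_inverse.2 ⟨PrimeSpectrum.comap g, fun Q => ?_, fun Q => ?_⟩
  · rw [← comap_comp_apply, comap_eq_id_of_forall_eq_pow (φ := f.comp g) hn hfg, id]
  · rw [← comap_comp_apply, comap_eq_id_of_forall_eq_pow (φ := g.comp f) hn hgf, id]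

theorem PrimeSpectrum.exists_mul_pow_mem_map_of_injective_comap {R S : Type*} [CommRing R]
    [CommRing S] {f : R →+* S} (hf : Injective (PrimeSpectrum.comap f)) (Q : PrimeSpectrum S)
    {q : S} (hq : q ∈ Q.asIdeal) :
    ∃ N, ∃ v ∉ Q.asIdeal.comap f, f v * q ^ N ∈ (Q.asIdeal.comap f).map f := by
  set P := Q.asIdeal.comap f
  by_contra! hcon
  let W := P.primeCompl.map f ⊔ Submonoid.powers q
  have hdisj : Disjoint ((P.map f : Ideal S) : Set S) W := by
    refine Set.disjoint_left.2 fun x hx hxW => ?_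
    obtain ⟨_, ⟨v, hv, rfl⟩, _, ⟨N, rfl⟩, rfl⟩ := Submonoid.mem_sup.1 hxW
    exact hcon N v hv hx
  obtain ⟨Q', hQ', hPQ', hQ'W⟩ := Ideal.exists_le_prime_disjoint _ W hdisj
  have hcomap : Q'.comap f = P := by
    refine le_antisymm (fun a ha => ?_) (Ideal.map_le_iff_le_comap.1 hPQ')
    by_contra haP
    exact Set.disjoint_left.1 hQ'W ha (le_sup_left (a := P.primeCompl.map f) ⟨a, haP, rfl⟩)
  have hQQ' : Q = ⟨Q', hQ'⟩ := hf (PrimeSpectrum.ext hcomap.symm)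
  subst hQQ'
  exact Set.disjoint_left.1 hQ'W hq
    (le_sup_right (a := P.primeCompl.map f) (Submonoid.mem_powers q))

theorem Ideal.exists_span_singleton_mul_pow_le_of_mem_minimalPrimes {R : Type*} [CommRing R]
    [IsNoetherianRing R] {I P : Ideal R} (hP : P ∈ I.minimalPrimes) :
    ∃ k, ∃ w ∉ P, Ideal.span {w} * P ^ k ≤ I := by
  classical
  have := hP.isPrime
  obtain ⟨k, hk⟩ := I.exists_radical_pow_le_of_fg I.radical.fg_of_isNoetherianRing
  have hfin := I.finite_minimalPrimes_of_isNoetherianRing R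
  set J := (hfin.toFinset.erase P).inf id
  rw [← I.sInf_minimalPrimes, ← hfin.coe_toFinset, ← hfin.toFinset.inf_id_eq_sInf,
    ← Finset.insert_erase (hfin.mem_toFinset.mpr hP), Finset.inf_insert, id_eq] at hk
  grw [← Ideal.mul_le_inf, mul_pow] at hk
  obtain ⟨w, hwJ, hwP⟩ : ∃ w ∈ J ^ k, w ∉ P := by
    by_contra! hJP
    obtain ⟨P', hP', hP'P⟩ := (this.inf_le' (s := hfin.toFinset.erase P) (f := id)).1
      (this.le_of_pow_le hJP)
    obtain ⟨hne, hP'min⟩ := Finset.mem_erase.1 hP'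
    exact hne (le_antisymm hP'P (hP.2 (hfin.mem_toFinset.1 hP'min).1 hP'P))
  exact ⟨k, w, hwP, Ideal.span_singleton_mul_le_iff.2 fun y hy =>
    mul_comm w y ▸ hk (Ideal.mul_mem_mul hy hwJ)⟩

theorem Submodule.colon_not_le_of_fg {R M : Type*} [CommRing R] [AddCommGroup M] [Module R M]
    {N N' : Submodule R M} (hN' : N'.FG) {P : Ideal R} (hP : P.IsPrime)
    (h : ∀ x ∈ N', ∃ u ∉ P, u • x ∈ N) : ¬ N.colon N' ≤ P := by
  classical
  obtain ⟨G, rfl⟩ := hN'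
  have hcolon : N.colon (G : Set M) = G.inf fun g => N.colon {g} := by
    ext r
    simp [mem_colon]
  rw [colon_span, hcolon, hP.inf_le']
  rintro ⟨g, hg, hle⟩
  obtain ⟨u, hu, hug⟩ := h g (subset_span hg)
  exact hu (hle (mem_colon_singleton.2 hug))

section ResidueField

variable {B : Type*} [CommRing B] {A C : Subring B} (h : A ≤ C) (Q : PrimeSpectrum C)

theorem residueFieldMapOfLE_residue_mk' (a : A)
    (t : (Q.asIdeal.comap (Subring.inclusion h)).primeCompl) :
    residueFieldMapOfLE h Q (residue _ (IsLocalization.mk' _ a t)) =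
      residue _ (IsLocalization.mk' (Localization.AtPrime Q.asIdeal) (Subring.inclusion h a)
        (⟨Subring.inclusion h t, t.2⟩ : Q.asIdeal.primeCompl)) :=
  (ResidueField.map_residue _ _).trans (congrArg _ (Localization.localRingHom_mk' _ _ _ _ _ _))

theorem isPurelyInseparableOfChar_residueFieldMapOfLE {p : ℕ}
    (hC : ∀ c ∈ C, c ^ p ∈ A) : (residueFieldMapOfLE h Q).IsPurelyInseparableOfChar p := by
  intro x
  obtain ⟨z, rfl⟩ := residue_surjective x
  obtain ⟨⟨c, s⟩, rfl⟩ := IsLocalization.mk'_surjective Q.asIdeal.primeCompl z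
  have hs : (⟨_, hC _ (s : C).2⟩ : A) ∈ (Q.asIdeal.comap (Subring.inclusion h)).primeCompl :=
    fun hs => s.2 (Q.isPrime.mem_of_pow_mem p hs)
  refine ⟨1, ⟨residue _ (IsLocalization.mk' _ ⟨_, hC _ c.2⟩ ⟨_, hs⟩), ?_⟩⟩
  rw [residueFieldMapOfLE_residue_mk', pow_one, ← map_pow, ← IsLocalization.mk'_pow]
  rfl

theorem exists_pow_mul_sub_mem_of_isPurelyInseparableOfChar {p : ℕ}
    (hQ : (residueFieldMapOfLE h Q).IsPurelyInseparableOfChar p) (c : C) :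
    ∃ n, ∃ a t : A, t ∉ Q.asIdeal.comap (Subring.inclusion h) ∧
      c ^ p ^ n * Subring.inclusion h t - Subring.inclusion h a ∈ Q.asIdeal := by
  set L := Localization.AtPrime Q.asIdeal
  obtain ⟨n, y, hy⟩ := hQ (residue L (algebraMap C L c))
  obtain ⟨z, rfl⟩ := residue_surjective y
  obtain ⟨⟨a, t⟩, rfl⟩ :=
    IsLocalization.mk'_surjective (Q.asIdeal.comap (Subring.inclusion h)).primeCompl z
  refine ⟨n, a, t, t.2, ?_⟩
  rw [residueFieldMapOfLE_residue_mk'] at hy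
  have key : residue L (algebraMap C L (c ^ p ^ n * Subring.inclusion h t)) =
      residue L (algebraMap C L (Subring.inclusion h a)) := by
    rw [map_mul, map_mul, map_pow, map_pow, ← hy, ← map_mul]
    exact congrArg _ (IsLocalization.mk'_spec ..)
  rw [← IsLocalization.AtPrime.to_map_mem_maximal_iff L Q.asIdeal, ← residue_eq_zero_iff,
    map_sub, map_sub, key, sub_self]

end ResidueField

namespace Subring

variable {B : Type*} [CommRing B] {p : ℕ} {A C : Subring B}

theorem isWeaklySubintegralIn_of_pow_mem [ExpChar B p] (h : A ≤ C)
    (hC : ∀ c ∈ C, c ^ p ∈ A) : A.IsWeaklySubintegralIn p C h := by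
  refine ⟨PrimeSpectrum.comap_bijective_of_forall_comp_eq_pow (expChar_pos B p).ne'
    (((frobenius B p).comp C.subtype).codRestrict A fun c => hC c c.2) ?_ ?_,
    fun Q => isPurelyInseparableOfChar_residueFieldMapOfLE h Q hC⟩
  all_goals intro; rfl

theorem IsWeaklyNormalIn.mem_of_pow_mem [ExpChar B p] (hA : A.IsWeaklyNormalIn p) {b : B}
    (hb : b ^ p ∈ A) : b ∈ A := by
  have hAC : A ≤ A.comap (frobenius B p) := fun a ha => A.pow_mem ha p
  rw [← hA _ hAC (isWeaklySubintegralIn_of_pow_mem hAC fun c hc => hc)]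
  exact hb

theorem mem_one_submodule_iff {x : B} : x ∈ (1 : Submodule A B) ↔ x ∈ A :=
  Submodule.mem_one.trans ⟨fun ⟨y, hy⟩ => hy ▸ y.2, fun hx => ⟨⟨x, hx⟩, rfl⟩⟩

def conductor (A C : Subring B) : Ideal A := (1 : Submodule A B).colon C

theorem mem_conductor {r : A} : r ∈ A.conductor C ↔ ∀ c ∈ C, (r : B) * c ∈ A :=
  Submodule.mem_colon.trans (forall₂_congr fun _ _ => mem_one_submodule_iff)

theorem coe_mem_of_mem_map_of_le_conductor (h : A ≤ C) {J : Ideal A}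
    (hJ : J ≤ A.conductor C) {z : C} (hz : z ∈ J.map (Subring.inclusion h)) : (z : B) ∈ A := by
  suffices ∀ c : C, ((z * c : C) : B) ∈ A by simpa using this 1
  induction hz using Submodule.span_induction with
  | mem _ hx =>
    obtain ⟨y, hy, rfl⟩ := hx
    exact fun c => mem_conductor.1 (hJ hy) c c.2
  | zero => simp
  | add x y _ _ hx hy => exact fun c => by simpa [add_mul] using A.add_mem (hx c) (hy c)
  | smul d x _ hx => exact fun c => by simpa [mul_comm, mul_left_comm] using hx (d * c)

theorem mem_of_pow_pow_mem (hA : ∀ b : B, b ^ p ∈ A → b ∈ A) {b : B} (n : ℕ)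
    (hb : b ^ p ^ n ∈ A) : b ∈ A := by
  induction n with
  | zero => simpa using hb
  | succ n ih => exact ih (hA _ (by rwa [← pow_mul, ← pow_succ]))

theorem mul_mem_of_mul_pow_pow_mem (hA : ∀ b : B, b ^ p ∈ A → b ∈ A) {u y : B} (hu : u ∈ A)
    {n : ℕ} (h : u * y ^ p ^ n ∈ A) : u * y ∈ A := by
  refine mem_of_pow_pow_mem hA n ?_
  generalize p ^ n = j at h ⊢
  cases j with
  | zero => simp
  | succ j =>
    rw [show (u * y) ^ (j + 1) = u ^ j * (u * y ^ (j + 1)) by ring]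
    exact A.mul_mem (A.pow_mem hu j) h

theorem exists_notMem_mul_mem [Fact p.Prime] [CharP B p] (hA : ∀ b : B, b ^ p ∈ A → b ∈ A)
    (h : A ≤ C) (hinj : Injective (PrimeSpectrum.comap (inclusion h)))
    (Q : PrimeSpectrum C) (hQ : (residueFieldMapOfLE h Q).IsPurelyInseparableOfChar p)
    {k : ℕ} {w : A} (hwQ : w ∉ Q.asIdeal.comap (inclusion h))
    (hw : Ideal.span {w} * Q.asIdeal.comap (inclusion h) ^ k ≤ A.conductor C) (c : C) :
    ∃ u ∉ Q.asIdeal.comap (inclusion h), (u : B) * c ∈ A := by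
  set f := inclusion h
  set P := Q.asIdeal.comap f
  obtain ⟨n, a, t, htP, hq⟩ := exists_pow_mul_sub_mem_of_isPurelyInseparableOfChar h Q hQ c
  set q := c ^ p ^ n * f t - f a
  obtain ⟨N, v, hvP, hv⟩ := PrimeSpectrum.exists_mul_pow_mem_map_of_injective_comap hinj Q hq
  obtain ⟨m, r, hr⟩ : ∃ m r, p ^ m = N * k + r :=
    ⟨N * k, _, (Nat.add_sub_cancel' (Nat.lt_pow_self (Fact.out : p.Prime).one_lt).le).symm⟩
  have hWq : ((w * v ^ k : A) : B) * (q : B) ^ p ^ m ∈ A := by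
    have hz : f w * (f v * q ^ N) ^ k * q ^ r ∈ (Ideal.span {w} * P ^ k).map f := by
      rw [Ideal.map_mul, Ideal.map_span, Set.image_singleton, Ideal.map_pow]
      exact Ideal.mul_mem_right _ _
        (Ideal.mul_mem_mul (Ideal.mem_span_singleton_self _) (Ideal.pow_mem_pow hv k))
    convert coe_mem_of_mem_map_of_le_conductor h hw hz using 1
    rw [hr]
    push_cast [f, coe_inclusion]
    ring
  have hy : ((w * v ^ k : A) : B) * ((t : B) * c ^ p ^ n) ^ p ^ m ∈ A := by
    have hq' : (t : B) * c ^ p ^ n = a + q := by push_cast [q, f, coe_inclusion]; ring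
    rw [hq', add_pow_char_pow, mul_add]
    exact A.add_mem (A.mul_mem (SetLike.coe_mem _) (A.pow_mem a.2 _)) hWq
  have hu : w * v ^ k * t ∈ P.primeCompl :=
    P.primeCompl.mul_mem (P.primeCompl.mul_mem hwQ (P.primeCompl.pow_mem hvP k)) htP
  refine ⟨_, hu, mul_mem_of_mul_pow_pow_mem hA (SetLike.coe_mem _) (n := n) ?_⟩
  simpa [mul_assoc] using mul_mem_of_mul_pow_pow_mem hA (SetLike.coe_mem _) hy

theorem isWeaklyNormalIn_of_forall_pow_mem [Fact p.Prime] [CharP B p] [IsNoetherianRing A]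
    [Module.Finite A B] (hA : ∀ b : B, b ^ p ∈ A → b ∈ A) : A.IsWeaklyNormalIn p := by
  intro C h ⟨hbij, hres⟩
  suffices A.conductor C = ⊤ from le_antisymm (fun c hc => by
    simpa using mem_conductor.1 (this ▸ Submodule.mem_top : (1 : A) ∈ A.conductor C) c hc) h
  by_contra hne
  obtain ⟨⟨P, hP⟩⟩ := Ideal.nonempty_minimalPrimes hne
  obtain ⟨Q, hQ⟩ := hbij.2 ⟨P, hP.isPrime⟩
  obtain rfl : P = Q.asIdeal.comap (inclusion h) := congrArg PrimeSpectrum.asIdeal hQ.symm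
  obtain ⟨k, w, hwQ, hw⟩ := Ideal.exists_span_singleton_mul_pow_le_of_mem_minimalPrimes hP
  let C' : Subalgebra A B := { C with algebraMap_mem' := fun a => h a.2 }
  refine Submodule.colon_not_le_of_fg (IsNoetherian.noetherian (Subalgebra.toSubmodule C'))
    hP.isPrime (fun c hc => ?_) hP.1.2
  obtain ⟨u, hu, huc⟩ := exists_notMem_mul_mem hA h hbij.1 Q (hres Q) hwQ hw ⟨c, hc⟩
  exact ⟨u, hu, mem_one_submodule_iff.2 huc⟩

end Subring

theorem weaklyNormalIn_iff_pow_general {B : Type*} [CommRing B]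
    (p : ℕ) (hp : p.Prime) (A : Subring B) [IsNoetherianRing A] [CharP A p]
    [Module.Finite A B] :
    A.IsWeaklyNormalIn p ↔ ∀ b : B, b ^ p ∈ A → b ∈ A := by
  have := Fact.mk hp
  have := charP_of_injective_ringHom A.subtype_injective p
  exact ⟨fun hA _ => hA.mem_of_pow_mem, Subring.isWeaklyNormalIn_of_forall_pow_mem⟩

/-- Let `p` be a prime and let `A ⊆ B` be a finite integral extension of reduced Noetherian
rings with `A` of characteristic `p`.  Then `A` is weakly normal in `B` if and only if every
`b ∈ B` with `b ^ p ∈ A` lies in `A`. -/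
theorem weaklyNormalIn_iff_pow {B : Type*} [CommRing B] [IsReduced B] [IsNoetherianRing B]
    (p : ℕ) (hp : p.Prime) (A : Subring B) [IsNoetherianRing A] [IsReduced A] [CharP A p]
    [Module.Finite A B] [Algebra.IsIntegral A B] :
    A.IsWeaklyNormalIn p ↔ ∀ b : B, b ^ p ∈ A → b ∈ A :=
  weaklyNormalIn_iff_pow_general p hp A
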